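/- Let p₁ = !![1/2, 0; 0, −1/2], p₂ = !![0, 1/2; 1/2, 0], k = !![0, −1/2; 1/2, 0]. Fix β, φ, t ∈ ℝ with β² = 1, and set m = t/2 and n = 1. Then exp(t·(cos(φ)·p₁ + sin(φ)·p₂ + β·k)) · exp(−t·β·k) equals the matrix with entries: (1,1) entry n·cos(βt/2) + m·(cos(βt/2 + φ) + β·sin(βt/2)); (1,2) entry n·sin(βt/2) + m·(sin(βt/2 + φ) − β·cos(βt/2)); (2,1) entry −n·sin(βt/2) + m·(sin(βt/2 + φ) + β·cos(βt/2)); (2,2) entry n·cos(βt/2) + m·(−cos(βt/2 + φ) + β·sin(βt/2)). -/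

import Mathlib

open NormedSpace Real
set_option linter.unnecessarySeqFocus false

noncomputable def cmat : ℂ →ₐ[ℝ] Matrix (Fin 2) (Fin 2) ℝ where
  toFun z := !![z.re, -z.im; z.im, z.re]
  map_one' := by
    ext i j; fin_cases i <;> fin_cases j <;>
      simp [Matrix.one_apply]
  map_mul' z w := by
    ext i j; fin_cases i <;> fin_cases j <;>
      simp [Matrix.mul_apply, Fin.sum_univ_two, Complex.mul_re, Complex.mul_im] <;> ring
  map_zero' := by
    ext i j; fin_cases i <;> fin_cases j <;> simp
  map_add' z w := by
    ext i j; fin_cases i <;> fin_cases j <;> simp [Matrix.add_apply] <;> ring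
  commutes' r := by
    ext i j; fin_cases i <;> fin_cases j <;>
      simp [Matrix.algebraMap_matrix_apply]

lemma cmat_cont : Continuous (cmat : ℂ → Matrix (Fin 2) (Fin 2) ℝ) := by
  apply continuous_matrix
  intro i j
  fin_cases i <;> fin_cases j <;> simp [cmat] <;> fun_prop

lemma exp_rot (θ : ℝ) :
    exp (!![0, -θ; θ, 0] : Matrix (Fin 2) (Fin 2) ℝ) =
      !![Real.cos θ, -Real.sin θ; Real.sin θ, Real.cos θ] := by
  have h1 : (!![0, -θ; θ, 0] : Matrix (Fin 2) (Fin 2) ℝ) = cmat (θ * Complex.I) := by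
    ext i j; fin_cases i <;> fin_cases j <;> simp [cmat]
  letI : SeminormedRing (Matrix (Fin 2) (Fin 2) ℝ) := Matrix.linftyOpSemiNormedRing
  letI : NormedRing (Matrix (Fin 2) (Fin 2) ℝ) := Matrix.linftyOpNormedRing
  letI : NormedAlgebra ℝ (Matrix (Fin 2) (Fin 2) ℝ) := Matrix.linftyOpNormedAlgebra
  rw [h1]; refine (map_exp cmat cmat_cont _).symm.trans ?_
  have h2 : exp ((θ : ℂ) * Complex.I) = Complex.exp (θ * Complex.I) := by
    rw [Complex.exp_eq_exp_ℂ]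
  rw [h2, Complex.exp_mul_I]
  ext i j; fin_cases i <;> fin_cases j <;>
    simp [cmat, Complex.add_re, Complex.add_im, Complex.cos_ofReal_re, Complex.sin_ofReal_re]

lemma exp_sq_zero (A : Matrix (Fin 2) (Fin 2) ℝ) (h : A * A = 0) : exp A = 1 + A := by
  rw [exp_eq_tsum ℝ]
  have hpow : ∀ n, n ∉ ({0, 1} : Finset ℕ) → ((n.factorial : ℝ)⁻¹ • A ^ n) = 0 := by
    intro n hn
    simp only [Finset.mem_insert, Finset.mem_singleton] at hn
    have h2 : 2 ≤ n := by omega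
    have : A ^ n = A ^ 2 * A ^ (n - 2) := by
      rw [← pow_add]; congr 1; omega
    rw [this, pow_two, h, zero_mul, smul_zero]
  beta_reduce
  rw [tsum_eq_sum hpow]
  simp [Finset.sum_insert, Finset.sum_singleton]

theorem geodesic_formula_beta_sq_eq_one
    (p₁ p₂ k : Matrix (Fin 2) (Fin 2) ℝ)
    (hp₁ : p₁ = !![1/2, 0; 0, -1/2])
    (hp₂ : p₂ = !![0, 1/2; 1/2, 0])
    (hk : k = !![0, -1/2; 1/2, 0])
    (β φ t : ℝ) (hβ : β ^ 2 = 1)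
    (m n : ℝ)
    (hm : m = t / 2)
    (hn : n = 1) :
    exp (t • (Real.cos φ • p₁ + Real.sin φ • p₂ + β • k)) * exp ((-(t * β)) • k) =
      !![n * cos (β * t / 2) + m * (cos (β * t / 2 + φ) + β * sin (β * t / 2)),
         n * sin (β * t / 2) + m * (sin (β * t / 2 + φ) - β * cos (β * t / 2));
         -n * sin (β * t / 2) + m * (sin (β * t / 2 + φ) + β * cos (β * t / 2)),
         n * cos (β * t / 2) + m * (-cos (β * t / 2 + φ) + β * sin (β * t / 2))] := by
  subst hp₁ hp₂ hk hm hn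
  obtain ⟨c, s, hc, hs⟩ : ∃ c s : ℝ, Real.cos φ = c ∧ Real.sin φ = s := ⟨_, _, rfl, rfl⟩
  have hcs : s ^ 2 + c ^ 2 = 1 := by rw [← hc, ← hs]; exact sin_sq_add_cos_sq φ
  rw [hc, hs]
  have hX : t • (c • (!![1/2, 0; 0, -1/2] : Matrix (Fin 2) (Fin 2) ℝ) +
      s • !![0, 1/2; 1/2, 0] + β • !![0, -1/2; 1/2, 0]) =
      !![t * c / 2, t * (s - β) / 2; t * (s + β) / 2, -(t * c / 2)] := by
    ext i j; fin_cases i <;> fin_cases j <;> simp [Matrix.smul_apply, Matrix.add_apply] <;> ring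
  have hXsq : (!![t * c / 2, t * (s - β) / 2; t * (s + β) / 2, -(t * c / 2)] :
      Matrix (Fin 2) (Fin 2) ℝ) * !![t * c / 2, t * (s - β) / 2; t * (s + β) / 2, -(t * c / 2)] = 0 := by
    ext i j; fin_cases i <;> fin_cases j <;>
      · simp [Matrix.mul_apply, Fin.sum_univ_two]
        first
          | linear_combination (t ^ 2 / 4) * hcs - (t ^ 2 / 4) * hβ
          | linear_combination (t ^ 2 / 4) * hβ - (t ^ 2 / 4) * hcs
          | ring1
  have hK : (-(t * β)) • (!![0, -1/2; 1/2, 0] : Matrix (Fin 2) (Fin 2) ℝ) =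
      !![0, -(-(t * β / 2)); -(t * β / 2), 0] := by
    ext i j; fin_cases i <;> fin_cases j <;> simp <;> ring
  rw [hX, exp_sq_zero _ hXsq, hK, exp_rot]
  have hca : Real.cos (β * t / 2 + φ) = Real.cos (β * t / 2) * c - Real.sin (β * t / 2) * s := by
    rw [← hc, ← hs]; exact Real.cos_add _ _
  have hsa : Real.sin (β * t / 2 + φ) = Real.sin (β * t / 2) * c + Real.cos (β * t / 2) * s := by
    rw [← hc, ← hs]; exact Real.sin_add _ _
  ext i j; fin_cases i <;> fin_cases j <;>
    · simp [Matrix.mul_apply, Matrix.add_apply, Matrix.one_apply, Fin.sum_univ_two,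
        Real.cos_neg, Real.sin_neg, hca, hsa, show -(t * β) / 2 = -(β * t / 2) by ring,
        show t * β / 2 = β * t / 2 by ring]
      ring
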